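/- arXiv:math/0403311 — 7 statements merged into one kernel-verified Lean document; each statement's English description precedes it below -/
import Mathlib

section
/- (Burns–Hale) If every nontrivial finitely-generated subgroup H of a group G admits a surjective homomorphism onto some nontrivial left-orderable group, then G is left-orderable. -/
/-!
A left order on a group is the same as a positive cone: a subsemigroup `P` with `1 ∉ P` that
contains `g` or `g⁻¹` for every `g ≠ 1`. By compactness (an ultralimit over the finite subsets
of `G`) it suffices to find, for each finite `F ⊆ G`, a subsemigroup avoiding `1` that contains
`g` or `g⁻¹` for every `g ∈ F \ {1}`. This goes by strong induction on `F`: if `F ≠ {1}`, the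
subgroup `H` generated by `F` surjects onto a nontrivial left-ordered `L`, so its kernel misses
some element of `F`; the cone for the kernel part of `F` given by induction, taken
lexicographically after the positive cone of `L`, handles all of `F`.
-/

universe u

def IsLeftOrderable (G : Type*) [Group G] : Prop :=
  ∃ r : G → G → Prop, IsStrictTotalOrder G r ∧ ∀ a b c : G, r a b ↔ r (c * a) (c * b)

def IsLocallyLOSurjective (G : Type u) [Group G] : Prop :=
  ∀ H : Subgroup G, H.FG → H ≠ ⊥ →
    ∃ (L : Type u) (_ : Group L), Nontrivial L ∧ IsLeftOrderable L ∧
      ∃ f : H →* L, Function.Surjective f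

namespace Subsemigroup

variable {G : Type*} [Group G]

structure IsPositiveCone (P : Subsemigroup G) : Prop where
  one_notMem : (1 : G) ∉ P
  mem_or_inv_mem : ∀ g : G, g ≠ 1 → g ∈ P ∨ g⁻¹ ∈ P

theorem IsPositiveCone.isLeftOrderable {P : Subsemigroup G} (hP : P.IsPositiveCone) :
    IsLeftOrderable G := by
  refine ⟨fun a b => a⁻¹ * b ∈ P, ?_, fun a b c => by
    simp only [mul_inv_rev, mul_assoc, inv_mul_cancel_left]⟩
  exact
    { trichotomous a b hab hba := by
        by_contra hne
        rcases hP.mem_or_inv_mem (a⁻¹ * b) (by rwa [ne_eq, inv_mul_eq_one]) with h | h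
        · exact hab h
        · exact hba (by simpa using h)
      irrefl a ha := hP.one_notMem (by simpa using ha)
      trans a b c hab hbc := by simpa [mul_assoc] using mul_mem hab hbc }

def ultralimit {ι M : Type*} [Mul M] (U : Ultrafilter ι) (S : ι → Subsemigroup M) :
    Subsemigroup M where
  carrier := {x | ∀ᶠ i in U, x ∈ S i}
  mul_mem' hx hy := (hx.and hy).mono fun _ h => mul_mem h.1 h.2

theorem mem_ultralimit {ι M : Type*} [Mul M] {U : Ultrafilter ι}
    {S : ι → Subsemigroup M} {x : M} : x ∈ ultralimit U S ↔ ∀ᶠ i in U, x ∈ S i :=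
  Iff.rfl

variable {K L : Type*} [Group K] [Group L]

def lex (f : K →* L) (Q : Subsemigroup L) (S : Subsemigroup K) : Subsemigroup K where
  carrier := {x | f x ∈ Q ∨ (f x = 1 ∧ x ∈ S)}
  mul_mem' := by
    rintro x y (hx | ⟨hx1, hx⟩) (hy | ⟨hy1, hy⟩)
    · exact Or.inl (by rw [map_mul]; exact mul_mem hx hy)
    · exact Or.inl (by rwa [map_mul, hy1, mul_one])
    · exact Or.inl (by rwa [map_mul, hx1, one_mul])
    · exact Or.inr ⟨by rw [map_mul, hx1, hy1, one_mul], mul_mem hx hy⟩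

variable {f : K →* L} {Q : Subsemigroup L} {S : Subsemigroup K}

theorem one_notMem_lex (hQ : (1 : L) ∉ Q) (hS : (1 : K) ∉ S) : (1 : K) ∉ lex f Q S := by
  rintro (h | ⟨-, h⟩)
  · exact hQ (by rwa [map_one] at h)
  · exact hS h

theorem mem_or_inv_mem_lex (hQ : Q.IsPositiveCone) {x : K}
    (hx : f x = 1 → x ∈ S ∨ x⁻¹ ∈ S) : x ∈ lex f Q S ∨ x⁻¹ ∈ lex f Q S := by
  by_cases h1 : f x = 1
  · rcases hx h1 with h | h
    · exact Or.inl (Or.inr ⟨h1, h⟩)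
    · exact Or.inr (Or.inr ⟨by rw [map_inv, h1, inv_one], h⟩)
  · rcases hQ.mem_or_inv_mem _ h1 with h | h
    · exact Or.inl (Or.inl h)
    · exact Or.inr (Or.inl (by rwa [map_inv]))

end Subsemigroup

theorem IsLeftOrderable.exists_isPositiveCone {G : Type*} [Group G] (hG : IsLeftOrderable G) :
    ∃ P : Subsemigroup G, P.IsPositiveCone := by
  obtain ⟨r, hr, hinv⟩ := hG
  have pos_mul : ∀ a b : G, r 1 a → r 1 b → r 1 (a * b) := fun a b ha hb =>
    _root_.trans ha (by simpa using (hinv 1 b a).mp hb)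
  refine ⟨⟨{g | r 1 g}, fun {a b} => pos_mul a b⟩, ⟨irrefl_of r 1, fun g hg => ?_⟩⟩
  rcases trichotomous_of r 1 g with h | h | h
  · exact Or.inl h
  · exact absurd h.symm hg
  · exact Or.inr (by simpa using (hinv g 1 g⁻¹).mp h)

theorem exists_isPositiveCone_of_forall_finset {G : Type*} [Group G]
    (h : ∀ F : Finset G,
      ∃ S : Subsemigroup G, (1 : G) ∉ S ∧ ∀ g ∈ F, g ≠ 1 → g ∈ S ∨ g⁻¹ ∈ S) :
    ∃ P : Subsemigroup G, P.IsPositiveCone := by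
  choose S one_notMem mem_or_inv_mem using h
  let U : Ultrafilter (Finset G) := .of Filter.atTop
  refine ⟨Subsemigroup.ultralimit U S, ⟨fun h1 => ?_, fun g hg => ?_⟩⟩
  · obtain ⟨F, hF⟩ := (Subsemigroup.mem_ultralimit.mp h1).exists
    exact one_notMem F hF
  · have hmem : ∀ᶠ F in (U : Filter (Finset G)), g ∈ F :=
      Ultrafilter.of_le _ <|
        (Filter.eventually_ge_atTop {g}).mono fun _ hF => hF (Finset.mem_singleton_self g)
    exact Ultrafilter.eventually_or.mp (hmem.mono fun F hF => mem_or_inv_mem F g hF hg)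

theorem Subgroup.exists_notMem_map_ker_of_surjective {G L : Type*} [Group G] [Group L]
    [Nontrivial L] {s : Set G} (f : closure s →* L) (hf : Function.Surjective f) :
    ∃ g ∈ s, g ∉ f.ker.map (closure s).subtype := by
  by_contra! hs
  obtain ⟨y, hy⟩ := exists_ne (1 : L)
  obtain ⟨x, rfl⟩ := hf y
  have hx := (closure_le _).mpr hs x.2
  rw [← coe_subtype, mem_map_iff_mem (subtype_injective _)] at hx
  exact hy hx

theorem IsLocallyLOSurjective.exists_subsemigroup {G : Type u} [Group G]
    (hG : IsLocallyLOSurjective G) (F : Finset G) : ∃ S : Subsemigroup G,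
      (1 : G) ∉ S ∧ ∀ g ∈ F, g ≠ 1 → g ∈ S ∨ g⁻¹ ∈ S := by
  classical
  induction F using Finset.strongInduction with
  | H F ih =>
  set H := Subgroup.closure (F : Set G)
  have hFH : ∀ g ∈ F, g ∈ H := fun g hg => Subgroup.subset_closure hg
  by_cases hH : H = ⊥
  · refine ⟨⊥, Subsemigroup.notMem_bot, fun g hg hg1 => absurd ?_ hg1⟩
    simpa [hH] using hFH g hg
  obtain ⟨L, _, _, hL, f, hf⟩ := hG H ⟨F, rfl⟩ hH
  obtain ⟨Q, hQ⟩ := hL.exists_isPositiveCone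
  set K := f.ker.map H.subtype
  obtain ⟨S, hS1, hS⟩ := ih (F.filter (· ∈ K))
    (Finset.filter_ssubset.mpr (Subgroup.exists_notMem_map_ker_of_surjective f hf))
  refine ⟨(Subsemigroup.lex f Q (S.comap H.subtype)).map H.subtype, ?_,
    fun g hg hg1 => ?_⟩
  · rintro ⟨x, hx, hx1⟩
    obtain rfl : x = 1 := Subtype.ext hx1
    have one_notMem_comap : (1 : H) ∉ S.comap H.subtype := hS1
    exact Subsemigroup.one_notMem_lex hQ.one_notMem one_notMem_comap hx
  · let x : H := ⟨g, hFH g hg⟩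
    have hx : f x = 1 → x ∈ S.comap H.subtype ∨ x⁻¹ ∈ S.comap H.subtype := fun h =>
      hS g (Finset.mem_filter.mpr ⟨hg, x, h, rfl⟩) hg1
    exact (Subsemigroup.mem_or_inv_mem_lex hQ hx).imp
      (Subsemigroup.mem_map_of_mem _) (Subsemigroup.mem_map_of_mem _)

/-- (Burns–Hale) If every nontrivial finitely-generated subgroup of `G` surjects
onto some nontrivial left-orderable group, then `G` is left-orderable. -/
theorem stmt5 {G : Type u} [Group G]
    (h : ∀ H : Subgroup G, H.FG → H ≠ ⊥ →
      ∃ (L : Type u) (_ : Group L), Nontrivial L ∧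
        (∃ r : L → L → Prop, IsStrictTotalOrder L r ∧
          ∀ a b c : L, r a b ↔ r (c * a) (c * b)) ∧
        ∃ f : H →* L, Function.Surjective f) :
    ∃ r : G → G → Prop, IsStrictTotalOrder G r ∧
      ∀ a b c : G, r a b ↔ r (c * a) (c * b) := by
  have hG : IsLocallyLOSurjective G := h
  obtain ⟨P, hP⟩ := exists_isPositiveCone_of_forall_finset hG.exists_subsemigroup
  exact hP.isLeftOrderable
end

section
/- Every locally indicable group is left-orderable. -/
/-!
A subsemigroup `P` of `G` with `1 ∉ P` that contains `g` or `g⁻¹` for every `g ≠ 1` is the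
positive cone of a left-invariant total order. We build `P` from a choice of signs
`ε : G → Bool`, as the subsemigroup generated by the oriented elements `g^(±1)`.

For a finite set `s` of nontrivial elements, local indicability gives a surjection `f` of
`⟨s⟩` onto `ℤ`, which is nonzero on some element of `s`. Orient the elements with `f ≠ 0` so
that `f > 0`, and the others (a strictly smaller set) by induction: a product of oriented
elements has `f ≥ 0`, with equality only if all its factors lie in the kernel, so it is never
`1`. The sign choices that work for a finite set form a closed subset of the compact space
`G → Bool`, and these subsets have the finite intersection property; a point in all of them
is a global choice of signs, since membership in a generated subsemigroup is witnessed by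
finitely many generators.
-/

open Function

theorem Subsemigroup.exists_finset_of_mem_closure {M : Type*} [Mul M] {T : Set M} {x : M}
    (hx : x ∈ Subsemigroup.closure T) :
    ∃ s : Finset M, ↑s ⊆ T ∧ x ∈ Subsemigroup.closure (s : Set M) := by
  classical
  induction hx using Subsemigroup.closure_induction with
  | mem x hx => exact ⟨{x}, by simpa using hx, Subsemigroup.subset_closure (by simp)⟩
  | mul x y _ _ hx hy =>
    obtain ⟨s, hsT, hxs⟩ := hx
    obtain ⟨t, htT, hyt⟩ := hy
    refine ⟨s ∪ t, by simp [hsT, htT], mul_mem ?_ ?_⟩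
    · exact Subsemigroup.closure_mono (by simp) hxs
    · exact Subsemigroup.closure_mono (by simp) hyt

theorem isClosed_of_forall_eqOn {ι X : Type*} [TopologicalSpace X] [DiscreteTopology X]
    {S : Set (ι → X)} (s : Finset ι) (hS : ∀ f g, Set.EqOn f g s → f ∈ S → g ∈ S) :
    IsClosed S := by
  refine isOpen_compl_iff.1 (isOpen_iff_forall_mem_open.2 fun f hf => ?_)
  refine ⟨(s : Set ι).pi fun i => {f i}, fun g hg hgS => hf (hS g f (fun i hi => hg i hi) hgS),
    isOpen_set_pi s.finite_toSet fun i _ => isOpen_discrete _, fun i _ => rfl⟩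

-- An element of the closure has weight `≥ 1`, and weight `1` only if all its factors lie in `Z`.
theorem one_notMem_closure_union_of_weight {K M : Type*} [Monoid K] [CommMonoid M]
    [PartialOrder M] [IsOrderedCancelMonoid M] (w : K →* M) {P Z : Set K}
    (hP : ∀ x ∈ P, 1 < w x) (hZ : ∀ x ∈ Z, w x = 1) (h : 1 ∉ Subsemigroup.closure Z) :
    1 ∉ Subsemigroup.closure (P ∪ Z) := by
  have key : ∀ x ∈ Subsemigroup.closure (P ∪ Z),
      1 ≤ w x ∧ (w x = 1 → x ∈ Subsemigroup.closure Z) := by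
    intro x hx
    induction hx using Subsemigroup.closure_induction with
    | mem x hx =>
      rcases hx with hx | hx
      · exact ⟨(hP x hx).le, fun h1 => absurd h1 (hP x hx).ne'⟩
      · exact ⟨(hZ x hx).ge, fun _ => Subsemigroup.subset_closure hx⟩
    | mul x y _ _ hx hy =>
      refine ⟨map_mul w x y ▸ one_le_mul hx.1 hy.1, fun hxy => ?_⟩
      rw [map_mul, mul_eq_one_iff_of_one_le hx.1 hy.1] at hxy
      exact mul_mem (hx.2 hxy.1) (hy.2 hxy.2)
  exact fun h1 => h ((key 1 h1).2 (map_one w))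

section

variable {G : Type*} [Group G]

theorem Subgroup.one_mem_closure_preimage_iff (H : Subgroup G) {B : Set G} (hB : B ⊆ H) :
    (1 : H) ∈ Subsemigroup.closure (Subtype.val ⁻¹' B) ↔
      (1 : G) ∈ Subsemigroup.closure B := by
  have hB' : Subtype.val '' (Subtype.val ⁻¹' B : Set H) = B :=
    Set.image_preimage_eq_of_subset (by simpa using hB)
  have hmap : (Subsemigroup.closure (Subtype.val ⁻¹' B)).map (H.subtype : H →ₙ* G) =
      Subsemigroup.closure B := by
    rw [MulHom.map_mclosure]
    exact congrArg _ hB'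
  rw [← hmap, Subsemigroup.mem_map]
  simp

theorem exists_leftInvariant_isStrictTotalOrder_of_cone (P : Subsemigroup G) (h1 : 1 ∉ P)
    (htot : ∀ g ≠ 1, g ∈ P ∨ g⁻¹ ∈ P) :
    ∃ r : G → G → Prop, IsStrictTotalOrder G r ∧
      ∀ a b c : G, r a b ↔ r (c * a) (c * b) := by
  refine ⟨fun a b => a⁻¹ * b ∈ P, ?_, fun a b c => by simp [mul_assoc]⟩
  refine { trichotomous := fun a b hab hba => ?_, irrefl := fun a ha => ?_,
           trans := fun a b c hab hbc => ?_ }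
  · by_contra hne
    rcases htot (a⁻¹ * b) (by rwa [Ne, inv_mul_eq_one]) with h | h
    · exact hab h
    · exact hba (by simpa using h)
  · exact h1 (by simpa using ha)
  · simpa [mul_assoc] using mul_mem hab hbc

def LocallyIndicable (G : Type*) [Group G] : Prop :=
  ∀ H : Subgroup G, H.FG → H ≠ ⊥ → ∃ f : H →* Multiplicative ℤ, Surjective f

def orient (ε : G → Bool) (g : G) : G := bif ε g then g else g⁻¹

theorem orient_of_eq_true {ε : G → Bool} {g : G} (h : ε g = true) : orient ε g = g := by
  simp [orient, h]

theorem orient_of_eq_false {ε : G → Bool} {g : G} (h : ε g = false) : orient ε g = g⁻¹ := by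
  simp [orient, h]

theorem orient_eq_or (ε : G → Bool) (g : G) : orient ε g = g ∨ orient ε g = g⁻¹ := by
  cases h : ε g
  · exact .inr (orient_of_eq_false h)
  · exact .inl (orient_of_eq_true h)

theorem orient_image_congr {ε ε' : G → Bool} {s : Set G} (h : Set.EqOn ε ε' s) :
    orient ε '' s = orient ε' '' s :=
  Set.image_congr fun g hg => by simp [orient, h hg]

theorem Subgroup.orient_image_subset (H : Subgroup G) (ε : G → Bool) {s : Set G} (hs : s ⊆ H) :
    orient ε '' s ⊆ H := by
  rintro _ ⟨g, hg, rfl⟩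
  rcases orient_eq_or ε g with h | h <;> rw [h]
  exacts [hs hg, inv_mem (hs hg)]

theorem Subgroup.exists_mem_apply_ne_one {M : Type*} [Monoid M] {s : Set G}
    (f : Subgroup.closure s →* M) (hf : f ≠ 1) :
    ∃ x : Subgroup.closure s, (x : G) ∈ s ∧ f x ≠ 1 := by
  by_contra! h
  exact hf (MonoidHom.eq_of_eqOn_dense Subgroup.closure_closure_coe_preimage h)

def refineSigns {M : Type*} [One M] [LinearOrder M] (w : G → M) (ε₀ : G → Bool) :
    G → Bool :=
  fun g => if w g = 1 then ε₀ g else decide (1 < w g)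

theorem Subgroup.one_notMem_closure_orient_refineSigns {M : Type*} [CommGroup M] [LinearOrder M]
    [IsOrderedMonoid M] {H : Subgroup G} (f : H →* M) {s : Finset G} (hsH : (s : Set G) ⊆ H)
    {ε₀ : G → Bool} (hε₀ : 1 ∉ Subsemigroup.closure
      (orient ε₀ '' ↑(s.filter (extend Subtype.val f 1 · = 1)))) :
    1 ∉ Subsemigroup.closure (orient (refineSigns (extend Subtype.val f 1) ε₀) '' s) := by
  classical
  set w : G → M := extend Subtype.val f 1
  have hw : ∀ x : H, w x = f x := Subtype.val_injective.extend_apply f 1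
  have hw_inv : ∀ g ∈ H, w g⁻¹ = (w g)⁻¹ := fun g hg => by
    have := hw ⟨g, hg⟩⁻¹
    rwa [map_inv, ← hw] at this
  set ε := refineSigns w ε₀
  have hsplit : orient ε '' s =
      orient ε '' ↑(s.filter (w · ≠ 1)) ∪ orient ε₀ '' ↑(s.filter (w · = 1)) := by
    rw [Set.union_comm,
      ← orient_image_congr (ε := ε) fun g hg => if_pos (Finset.mem_filter.1 hg).2,
      ← Set.image_union, ← Finset.coe_union, Finset.filter_union_filter_not_eq]
  rw [← H.one_mem_closure_preimage_iff (H.orient_image_subset ε hsH), hsplit, Set.preimage_union]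
  refine one_notMem_closure_union_of_weight f ?_ ?_ ?_
  · rintro x ⟨g, hg, hgx⟩
    obtain ⟨hgs, hg1⟩ := Finset.mem_filter.1 hg
    rw [← hw, ← hgx]
    by_cases hlt : 1 < w g
    · rwa [orient_of_eq_true (by simp [ε, refineSigns, hg1, hlt])]
    · rw [orient_of_eq_false (by simp [ε, refineSigns, hg1, hlt]), hw_inv g (hsH hgs)]
      exact one_lt_inv'.2 (lt_of_le_of_ne (not_lt.1 hlt) hg1)
  · rintro x ⟨g, hg, hgx⟩
    obtain ⟨hgs, hg1⟩ := Finset.mem_filter.1 hg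
    rw [← hw, ← hgx]
    rcases orient_eq_or ε₀ g with h | h <;> rw [h]
    exacts [hg1, by rw [hw_inv g (hsH hgs), hg1, inv_one]]
  · rwa [H.one_mem_closure_preimage_iff
      (H.orient_image_subset ε₀ ((Finset.coe_subset.2 (Finset.filter_subset _ s)).trans hsH))]

theorem LocallyIndicable.exists_orient_one_notMem_closure (hG : LocallyIndicable G)
    (s : Finset G) (hs : (1 : G) ∉ s) :
    ∃ ε : G → Bool, 1 ∉ Subsemigroup.closure (orient ε '' s) := by
  induction s using Finset.strongInduction with
  | H s ih =>
  obtain rfl | ⟨g₀, hg₀⟩ := s.eq_empty_or_nonempty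
  · exact ⟨fun _ => true, by simp [Subsemigroup.notMem_bot]⟩
  set H := Subgroup.closure (s : Set G)
  have hH : H ≠ ⊥ := fun h =>
    hs (Set.mem_singleton_iff.1 (Subgroup.closure_eq_bot_iff.1 h hg₀) ▸ hg₀)
  obtain ⟨f, hf⟩ := hG H ⟨s, rfl⟩ hH
  obtain ⟨g₁, hg₁s, hg₁⟩ := Subgroup.exists_mem_apply_ne_one f fun h1 => by
    simpa [h1, eq_comm (a := (1 : Multiplicative ℤ))] using hf (Multiplicative.ofAdd 1)
  have hs₀ : s.filter (extend Subtype.val f 1 · = 1) ⊂ s := Finset.filter_ssubset.2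
    ⟨g₁, hg₁s, by rwa [Subtype.val_injective.extend_apply]⟩
  obtain ⟨ε₀, hε₀⟩ := ih _ hs₀ fun h => hs (Finset.mem_of_mem_filter _ h)
  exact ⟨_, Subgroup.one_notMem_closure_orient_refineSigns f Subgroup.subset_closure hε₀⟩

theorem exists_orient_one_notMem_closure_of_finset
    (h : ∀ s : Finset G, 1 ∉ s →
      ∃ ε : G → Bool, 1 ∉ Subsemigroup.closure (orient ε '' s)) :
    ∃ ε : G → Bool, 1 ∉ Subsemigroup.closure (orient ε '' {g | g ≠ 1}) := by
  classical
  let A : Finset G → Set (G → Bool) := fun s =>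
    {ε | 1 ∉ Subsemigroup.closure (orient ε '' ↑(s.erase 1))}
  have hA_anti {s t : Finset G} (hst : s ⊆ t) : A t ⊆ A s := fun ε hε h1 => hε <|
    Subsemigroup.closure_mono
      (Set.image_mono <| Finset.coe_subset.2 <| Finset.erase_subset_erase 1 hst) h1
  have hA_closed (s : Finset G) : IsClosed (A s) :=
    isClosed_of_forall_eqOn (s.erase 1) fun ε ε' hεε' hε => by
      simpa only [A, Set.mem_ofPred_eq, orient_image_congr hεε'] using hε
  obtain ⟨ε, hε⟩ := IsCompact.nonempty_iInter_of_directed_nonempty_isCompact_isClosed A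
    (fun s t => ⟨s ∪ t, hA_anti Finset.subset_union_left, hA_anti Finset.subset_union_right⟩)
    (fun s => h (s.erase 1) (Finset.notMem_erase 1 s)) (fun s => (hA_closed s).isCompact)
    hA_closed
  refine ⟨ε, fun h1 => ?_⟩
  obtain ⟨u, hu, h1u⟩ := Subsemigroup.exists_finset_of_mem_closure h1
  obtain ⟨t, ht, rfl⟩ := Finset.subset_set_image_iff.1 hu
  refine Set.mem_iInter.1 hε t ?_
  rwa [Finset.erase_eq_of_notMem fun h => ht h rfl, ← Finset.coe_image]

end

/-- Every locally indicable group is left-orderable. -/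
theorem stmt6 {G : Type*} [Group G]
    (h : ∀ H : Subgroup G, H.FG → H ≠ ⊥ →
      ∃ f : H →* Multiplicative ℤ, Function.Surjective f) :
    ∃ r : G → G → Prop, IsStrictTotalOrder G r ∧
      ∀ a b c : G, r a b ↔ r (c * a) (c * b) := by
  obtain ⟨ε, hε⟩ := exists_orient_one_notMem_closure_of_finset
    (LocallyIndicable.exists_orient_one_notMem_closure h)
  refine exists_leftInvariant_isStrictTotalOrder_of_cone _ hε fun g hg => ?_
  have hg' : orient ε g ∈ Subsemigroup.closure (orient ε '' {g | g ≠ 1}) :=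
    Subsemigroup.subset_closure ⟨g, hg, rfl⟩
  rcases orient_eq_or ε g with he | he <;> rw [he] at hg' <;> simp [hg']
end

section
/- Given a short exact sequence 0 → K → G → H → 0 where K is left-ordered and H is circularly-ordered, the group G admits a left-invariant circular order such that the quotient map G → H is monotone. -/
/-!
The fibres of `φ` are the cosets of `ι K`, and the left order of `K` orders each of them
left-invariantly: `a < b` when `a⁻¹ * b = ι k` with `1 < k`. Inserting each fibre, as a line, at
its point of the circle `H` gives a lexicographic circular order on `G`: a triple is compared in
`H` when its images are distinct and along the fibres otherwise. Left multiplication in `G`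
permutes the fibres compatibly with left multiplication in `H` and preserves the fibre order,
so this circular order is left-invariant.
-/

/-- A circular order on `S`, following Calegari: for each `p` a strict total
order on `S \ {p}`, any two of which differ by a cut, together with the
three-element (cyclicity) condition. `o p x y` means `x <_p y`. -/
def IsCircularOrderFam {S : Type*} (o : S → S → S → Prop) : Prop :=
  (∀ p x y, o p x y → x ≠ p ∧ y ≠ p ∧ x ≠ y) ∧
  (∀ p x y, x ≠ p → y ≠ p → x ≠ y → o p x y ∨ o p y x) ∧
  (∀ p x y, o p x y → ¬ o p y x) ∧
  (∀ p x y z, o p x y → o p y z → o p x z) ∧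
  (∀ p x y, o p x y → o y p x) ∧
  (∀ p q x y, p ≠ q → x ≠ p → x ≠ q → y ≠ p → y ≠ q → x ≠ y →
    ((o p x q → o p q y → o q y x) ∧ (o p x y → ¬(o p x q ∧ o p q y) → o q x y)))

structure IsCyclicOrder {S : Type*} (c : S → S → S → Prop) : Prop where
  ne : ∀ a b d, c a b d → a ≠ b ∧ b ≠ d ∧ a ≠ d
  cyclic_left : ∀ a b d, c a b d → c b d a
  asymm : ∀ a b d, c a b d → ¬ c a d b
  trans : ∀ a b d e, c a b d → c a d e → c a b e
  total : ∀ a b d, a ≠ b → b ≠ d → a ≠ d → c a b d ∨ c a d b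

namespace IsCyclicOrder

variable {S : Type*} {c : S → S → S → Prop}

theorem cyclic_right (hc : IsCyclicOrder c) {a b d : S} (h : c a b d) : c d a b :=
  hc.cyclic_left _ _ _ (hc.cyclic_left _ _ _ h)

theorem isCircularOrderFam (hc : IsCyclicOrder c) : IsCircularOrderFam c := by
  refine ⟨fun p x y h => ?_, fun p x y hxp hyp hxy => hc.total p x y hxp.symm hxy hyp.symm,
    hc.asymm, hc.trans, fun p x y h => hc.cyclic_right h, ?_⟩
  · obtain ⟨hpx, hxy, hpy⟩ := hc.ne p x y h
    exact ⟨hpx.symm, hpy.symm, hxy⟩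
  intro p q x y _ hxp hxq hyp hyq hxy
  refine ⟨fun hpxq hpqy => hc.trans _ _ _ _ (hc.cyclic_left _ _ _ hpqy) (hc.cyclic_right hpxq),
    fun hpxy hcut => ?_⟩
  -- if `y, x` were in order as seen from `q`, then `q` would lie between `x` and `y` seen from `p`
  refine (hc.total q x y hxq.symm hxy hyq.symm).resolve_right fun hqyx => hcut ⟨?_, ?_⟩
  · exact hc.cyclic_right <|
      hc.trans _ _ _ _ (hc.cyclic_right hqyx) (hc.cyclic_left _ _ _ hpxy)
  · exact hc.cyclic_left _ _ _ <|
      hc.trans _ _ _ _ (hc.cyclic_right hpxy) (hc.cyclic_left _ _ _ hqyx)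

end IsCyclicOrder

theorem IsCircularOrderFam.isCyclicOrder {S : Type*} {o : S → S → S → Prop}
    (ho : IsCircularOrderFam o) : IsCyclicOrder o where
  ne p x y h := by
    obtain ⟨hxp, hyp, hxy⟩ := ho.1 p x y h
    exact ⟨hxp.symm, hxy, hyp.symm⟩
  cyclic_left p x y h := ho.2.2.2.2.1 _ _ _ (ho.2.2.2.2.1 _ _ _ h)
  asymm := ho.2.2.1
  trans := ho.2.2.2.1
  total p x y hpx hxy hpy := ho.2.1 p x y hpx.symm hpy.symm hxy

section LexCyclic

variable {G H : Type*} (φ : G → H) (c : H → H → H → Prop) (s : G → G → Prop)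

def lexCyclic (p x y : G) : Prop :=
  (φ p ≠ φ x ∧ φ x ≠ φ y ∧ φ p ≠ φ y ∧ c (φ p) (φ x) (φ y)) ∨
  (φ p = φ x ∧ φ x ≠ φ y ∧ s p x) ∨
  (φ x = φ y ∧ φ p ≠ φ x ∧ s x y) ∨
  (φ p = φ y ∧ φ y ≠ φ x ∧ s y p) ∨
  (φ p = φ x ∧ φ x = φ y ∧ ((s p x ∧ s x y) ∨ (s x y ∧ s y p) ∨ (s y p ∧ s p x)))

variable {φ c s}

theorem lexCyclic_monotone {p x y : G} (h : lexCyclic φ c s p x y) :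
    φ x = φ y ∨ φ x = φ p ∨ φ y = φ p ∨ c (φ p) (φ x) (φ y) := by
  unfold lexCyclic at h
  grind

theorem lexCyclic_map {f : G → G} {g : H → H} (hφ : ∀ x, φ (f x) = g (φ x))
    (hg : Function.Injective g) (hc : ∀ a b d, c (g a) (g b) (g d) ↔ c a b d)
    (hs : ∀ a b, s (f a) (f b) ↔ s a b) (p x y : G) :
    lexCyclic φ c s (f p) (f x) (f y) ↔ lexCyclic φ c s p x y := by
  simp only [lexCyclic, ne_eq, hφ, hg.eq_iff, hc, hs]

variable [IsStrictOrder G s]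

theorem IsCyclicOrder.lexCyclic (hc : IsCyclicOrder c)
    (hs : ∀ a b, φ a = φ b → a ≠ b → s a b ∨ s b a) : IsCyclicOrder (lexCyclic φ c s) := by
  have s_trans : ∀ a b d, s a b → s b d → s a d := fun _ _ _ => _root_.trans
  have s_irrefl : ∀ a, ¬ s a a := irrefl
  unfold _root_.lexCyclic
  constructor
  · grind
  · grind [hc.cyclic_left]
  · grind [hc.asymm]
  · intro p x y z h₁ h₂
    rcases h₁ with h₁ | h₁ | h₁ | h₁ | ⟨_, _, h₁ | h₁ | h₁⟩ <;> grind [hc.asymm, hc.trans]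
  · intro p x y _ _ _
    by_cases φ p = φ x <;> by_cases φ p = φ y <;> grind [hc.total]

end LexCyclic

section CosetOrder

variable {K G : Type*} [Group K] [Group G] (ι : K →* G) (r : K → K → Prop)

def cosetOrder (a b : G) : Prop :=
  ∃ k, ι k = a⁻¹ * b ∧ r 1 k

variable {ι r}

theorem cosetOrder_mul_left (g a b : G) :
    cosetOrder ι r (g * a) (g * b) ↔ cosetOrder ι r a b := by
  simp only [cosetOrder, mul_inv_rev, mul_assoc, inv_mul_cancel_left]

theorem cosetOrder_isStrictOrder (hι : Function.Injective ι) [IsStrictOrder K r]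
    (hr : ∀ a b c : K, r a b ↔ r (c * a) (c * b)) : IsStrictOrder G (cosetOrder ι r) where
  irrefl a := by
    rintro ⟨k, hk, hk1⟩
    rw [inv_mul_cancel, ← map_one ι] at hk
    exact irrefl _ (hι hk ▸ hk1)
  trans a b d := by
    rintro ⟨k, hk, hk1⟩ ⟨l, hl, hl1⟩
    refine ⟨k * l, by rw [map_mul, hk, hl]; group, _root_.trans hk1 ?_⟩
    simpa using (hr 1 l k).mp hl1

theorem cosetOrder_total [Std.Trichotomous r] (hr : ∀ a b c : K, r a b ↔ r (c * a) (c * b))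
    {a b : G} (hab : a⁻¹ * b ∈ ι.range) (hne : a ≠ b) :
    cosetOrder ι r a b ∨ cosetOrder ι r b a := by
  obtain ⟨k, hk⟩ := hab
  rcases trichotomous_of r 1 k with h | rfl | h
  · exact .inl ⟨k, hk, h⟩
  · exact absurd (inv_mul_eq_one.mp (by rw [← hk, map_one])) hne
  · refine .inr ⟨k⁻¹, by rw [map_inv, hk, mul_inv_rev, inv_inv], ?_⟩
    simpa using (hr k 1 k⁻¹).mp h

end CosetOrder

theorem stmt9_general {K G H : Type*} [Group K] [Group G] [Group H]
    (ι : K →* G) (φ : G →* H)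
    (hι : Function.Injective ι)
    (hexact : ι.range = φ.ker)
    (rK : K → K → Prop)
    (hK : IsStrictTotalOrder K rK ∧ ∀ a b c : K, rK a b ↔ rK (c * a) (c * b))
    (oH : H → H → H → Prop)
    (hH : IsCircularOrderFam oH ∧ ∀ g p x y : H, oH p x y ↔ oH (g * p) (g * x) (g * y)) :
    ∃ oG : G → G → G → Prop,
      IsCircularOrderFam oG ∧
      (∀ g p x y : G, oG p x y ↔ oG (g * p) (g * x) (g * y)) ∧
      (∀ d x y : G, oG d x y →
        φ x = φ y ∨ φ x = φ d ∨ φ y = φ d ∨ oH (φ d) (φ x) (φ y)) := by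
  obtain ⟨hrK, hinvK⟩ := hK
  have : IsStrictOrder G (cosetOrder ι rK) := cosetOrder_isStrictOrder hι hinvK
  refine ⟨lexCyclic φ oH (cosetOrder ι rK), ?_, fun g p x y => ?_, fun d x y => lexCyclic_monotone⟩
  · refine (hH.1.isCyclicOrder.lexCyclic fun a b hab hne => ?_).isCircularOrderFam
    exact cosetOrder_total hinvK (hexact ▸ φ.eq_iff.mp hab.symm) hne
  · exact (lexCyclic_map (fun x => map_mul φ g x) (mul_right_injective (φ g))
      (fun a b d => (hH.2 (φ g) a b d).symm) (cosetOrder_mul_left g) p x y).symm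

/-- Given a short exact sequence `0 → K → G → H → 0` with `K` left-ordered and
`H` circularly-ordered, `G` admits a left-invariant circular order making the
quotient map `G → H` monotone. -/
theorem stmt9 {K G H : Type*} [Group K] [Group G] [Group H]
    (ι : K →* G) (φ : G →* H)
    (hι : Function.Injective ι) (hφ : Function.Surjective φ)
    (hexact : ι.range = φ.ker)
    (rK : K → K → Prop)
    (hK : IsStrictTotalOrder K rK ∧ ∀ a b c : K, rK a b ↔ rK (c * a) (c * b))
    (oH : H → H → H → Prop)
    (hH : IsCircularOrderFam oH ∧ ∀ g p x y : H, oH p x y ↔ oH (g * p) (g * x) (g * y)) :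
    ∃ oG : G → G → G → Prop,
      IsCircularOrderFam oG ∧
      (∀ g p x y : G, oG p x y ↔ oG (g * p) (g * x) (g * y)) ∧
      (∀ d x y : G, oG d x y →
        φ x = φ y ∨ φ x = φ d ∨ φ y = φ d ∨ oH (φ d) (φ x) (φ y)) :=
  stmt9_general ι φ hι hexact rK hK oH hH
end

section
/- A family of circular orderings on all triples of distinct elements of a set S extends to a circular ordering of S if and only if for every four-element subset Q of S, the circular orderings on triples of elements of Q are simultaneously induced by some circular ordering of Q; in this case the extension to S is unique. -/
/-- A family of circular orderings on all triples of distinct elements of `S`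
extends to a circular ordering of `S` iff its restriction to every four-element
subset is induced by some circular ordering of that subset; in that case the
extension is unique. Here `t p x y` means the triple `(p, x, y)` is
positively ordered. -/
theorem stmt13 {S : Type*} (t : S → S → S → Prop)
    (hd : ∀ p x y, t p x y → x ≠ p ∧ y ≠ p ∧ x ≠ y)
    (htot : ∀ p x y : S, x ≠ p → y ≠ p → x ≠ y → t p x y ∨ t p y x)
    (hasym : ∀ p x y, t p x y → ¬ t p y x)
    (hcyc : ∀ p x y, t p x y → t y p x) :
    ((∃ O : S → S → S → Prop, IsCircularOrderFam O ∧
        ∀ p x y : S, x ≠ p → y ≠ p → x ≠ y → (O p x y ↔ t p x y)) ↔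
      (∀ Q : Finset S, Q.card = 4 →
        ∃ OQ : {x // x ∈ Q} → {x // x ∈ Q} → {x // x ∈ Q} → Prop,
          IsCircularOrderFam OQ ∧
          ∀ p x y : {x // x ∈ Q}, x ≠ p → y ≠ p → x ≠ y →
            (OQ p x y ↔ t (p : S) (x : S) (y : S)))) ∧
    (∀ O₁ O₂ : S → S → S → Prop,
      (IsCircularOrderFam O₁ ∧
        ∀ p x y : S, x ≠ p → y ≠ p → x ≠ y → (O₁ p x y ↔ t p x y)) →
      (IsCircularOrderFam O₂ ∧
        ∀ p x y : S, x ≠ p → y ≠ p → x ≠ y → (O₂ p x y ↔ t p x y)) →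
      O₁ = O₂) := by
  classical
  constructor
  · constructor
    · -- forward: restrict O to Q
      rintro ⟨O, ⟨h1, h2, h3, h4, h5, h6⟩, hOt⟩ Q hQcard
      refine ⟨fun a b c => O a.1 b.1 c.1, ⟨?_, ?_, ?_, ?_, ?_, ?_⟩, ?_⟩
      · intro p x y h
        obtain ⟨a, b, c⟩ := h1 _ _ _ h
        exact ⟨Subtype.coe_ne_coe.mp a, Subtype.coe_ne_coe.mp b, Subtype.coe_ne_coe.mp c⟩
      · intro p x y hx hy hxy
        exact h2 _ _ _ (Subtype.coe_ne_coe.mpr hx) (Subtype.coe_ne_coe.mpr hy)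
          (Subtype.coe_ne_coe.mpr hxy)
      · exact fun p x y => h3 _ _ _
      · exact fun p x y z => h4 _ _ _ _
      · exact fun p x y => h5 _ _ _
      · intro p q x y a b c d e f
        exact h6 _ _ _ _ (Subtype.coe_ne_coe.mpr a) (Subtype.coe_ne_coe.mpr b)
          (Subtype.coe_ne_coe.mpr c) (Subtype.coe_ne_coe.mpr d)
          (Subtype.coe_ne_coe.mpr e) (Subtype.coe_ne_coe.mpr f)
      · intro p x y hx hy hxy
        exact hOt _ _ _ (Subtype.coe_ne_coe.mpr hx) (Subtype.coe_ne_coe.mpr hy)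
          (Subtype.coe_ne_coe.mpr hxy)
    · -- backward
      intro hQ
      have htrans : ∀ p x y z : S, p ≠ x → p ≠ y → p ≠ z → x ≠ y → x ≠ z → y ≠ z →
          t p x y → t p y z → t p x z := by
        intro p x y z hpx hpy hpz hxy hxz hyz t1 t2
        have hc : ({p, x, y, z} : Finset S).card = 4 := by
          rw [Finset.card_insert_of_notMem (by simp [hpx, hpy, hpz]),
            Finset.card_insert_of_notMem (by simp [hxy, hxz]),
            Finset.card_insert_of_notMem (by simp [hyz]), Finset.card_singleton]
        obtain ⟨OQ, ⟨g1, g2, g3, g4, g5, g6⟩, hOQt⟩ := hQ _ hc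
        have hp : p ∈ ({p, x, y, z} : Finset S) := by simp
        have hx : x ∈ ({p, x, y, z} : Finset S) := by simp
        have hy : y ∈ ({p, x, y, z} : Finset S) := by simp
        have hz : z ∈ ({p, x, y, z} : Finset S) := by simp
        have e1 : OQ ⟨p, hp⟩ ⟨x, hx⟩ ⟨y, hy⟩ :=
          (hOQt _ _ _ (Subtype.coe_ne_coe.mp hpx.symm) (Subtype.coe_ne_coe.mp hpy.symm)
            (Subtype.coe_ne_coe.mp hxy)).mpr t1
        have e2 : OQ ⟨p, hp⟩ ⟨y, hy⟩ ⟨z, hz⟩ :=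
          (hOQt _ _ _ (Subtype.coe_ne_coe.mp hpy.symm) (Subtype.coe_ne_coe.mp hpz.symm)
            (Subtype.coe_ne_coe.mp hyz)).mpr t2
        exact (hOQt _ _ _ (Subtype.coe_ne_coe.mp hpx.symm) (Subtype.coe_ne_coe.mp hpz.symm)
          (Subtype.coe_ne_coe.mp hxz)).mp (g4 _ _ _ _ e1 e2)
      have hcut : ∀ p q x y : S, p ≠ q → p ≠ x → p ≠ y → q ≠ x → q ≠ y → x ≠ y →
          (t p x q → t p q y → t q y x) ∧ (t p x y → ¬(t p x q ∧ t p q y) → t q x y) := by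
        intro p q x y hpq hpx hpy hqx hqy hxy
        have hc : ({p, q, x, y} : Finset S).card = 4 := by
          rw [Finset.card_insert_of_notMem (by simp [hpq, hpx, hpy]),
            Finset.card_insert_of_notMem (by simp [hqx, hqy]),
            Finset.card_insert_of_notMem (by simp [hxy]), Finset.card_singleton]
        obtain ⟨OQ, ⟨g1, g2, g3, g4, g5, g6⟩, hOQt⟩ := hQ _ hc
        have hp : p ∈ ({p, q, x, y} : Finset S) := by simp
        have hq : q ∈ ({p, q, x, y} : Finset S) := by simp
        have hx : x ∈ ({p, q, x, y} : Finset S) := by simp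
        have hy : y ∈ ({p, q, x, y} : Finset S) := by simp
        have G := g6 ⟨p, hp⟩ ⟨q, hq⟩ ⟨x, hx⟩ ⟨y, hy⟩ (Subtype.coe_ne_coe.mp hpq)
          (Subtype.coe_ne_coe.mp hpx.symm) (Subtype.coe_ne_coe.mp hqx.symm)
          (Subtype.coe_ne_coe.mp hpy.symm) (Subtype.coe_ne_coe.mp hqy.symm)
          (Subtype.coe_ne_coe.mp hxy)
        constructor
        · intro t1 t2
          exact (hOQt _ _ _ (Subtype.coe_ne_coe.mp hqy.symm) (Subtype.coe_ne_coe.mp hqx.symm)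
            (Subtype.coe_ne_coe.mp hxy.symm)).mp
            (G.1 ((hOQt _ _ _ (Subtype.coe_ne_coe.mp hpx.symm) (Subtype.coe_ne_coe.mp hpq.symm)
              (Subtype.coe_ne_coe.mp hqx.symm)).mpr t1)
              ((hOQt _ _ _ (Subtype.coe_ne_coe.mp hpq.symm) (Subtype.coe_ne_coe.mp hpy.symm)
                (Subtype.coe_ne_coe.mp hqy)).mpr t2))
        · intro t1 hn
          refine (hOQt _ _ _ (Subtype.coe_ne_coe.mp hqx.symm) (Subtype.coe_ne_coe.mp hqy.symm)
            (Subtype.coe_ne_coe.mp hxy)).mp (G.2 ?_ ?_)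
          · exact (hOQt _ _ _ (Subtype.coe_ne_coe.mp hpx.symm) (Subtype.coe_ne_coe.mp hpy.symm)
              (Subtype.coe_ne_coe.mp hxy)).mpr t1
          · rintro ⟨a, b⟩
            exact hn ⟨(hOQt _ _ _ (Subtype.coe_ne_coe.mp hpx.symm) (Subtype.coe_ne_coe.mp hpq.symm)
              (Subtype.coe_ne_coe.mp hqx.symm)).mp a,
              (hOQt _ _ _ (Subtype.coe_ne_coe.mp hpq.symm) (Subtype.coe_ne_coe.mp hpy.symm)
                (Subtype.coe_ne_coe.mp hqy)).mp b⟩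
      refine ⟨fun p x y => x ≠ p ∧ y ≠ p ∧ x ≠ y ∧ t p x y, ⟨?_, ?_, ?_, ?_, ?_, ?_⟩, ?_⟩
      · exact fun p x y h => ⟨h.1, h.2.1, h.2.2.1⟩
      · intro p x y hx hy hxy
        rcases htot p x y hx hy hxy with h | h
        · exact Or.inl ⟨hx, hy, hxy, h⟩
        · exact Or.inr ⟨hy, hx, hxy.symm, h⟩
      · rintro p x y ⟨_, _, _, h⟩ ⟨_, _, _, h'⟩
        exact hasym _ _ _ h h'
      · rintro p x y z ⟨hx, hy, hxy, t1⟩ ⟨-, hz, hyz, t2⟩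
        have hxz : x ≠ z := by
          rintro rfl
          exact hasym _ _ _ t1 t2
        exact ⟨hx, hz, hxz, htrans p x y z hx.symm hy.symm hz.symm hxy hxz hyz t1 t2⟩
      · rintro p x y ⟨hx, hy, hxy, h⟩
        exact ⟨hy.symm, hxy, hx.symm, hcyc _ _ _ h⟩
      · intro p q x y hpq hxp hxq hyp hyq hxy
        have H := hcut p q x y hpq hxp.symm hyp.symm hxq.symm hyq.symm hxy
        constructor
        · rintro ⟨-, -, -, t1⟩ ⟨-, -, -, t2⟩
          exact ⟨hyq, hxq, hxy.symm, H.1 t1 t2⟩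
        · rintro ⟨-, -, -, t1⟩ hn
          refine ⟨hxq, hyq, hxy, H.2 t1 ?_⟩
          rintro ⟨a, b⟩
          exact hn ⟨⟨hxp, hpq.symm, hxq, a⟩, ⟨hpq.symm, hyp, hyq.symm, b⟩⟩
      · intro p x y hx hy hxy
        exact ⟨fun h => h.2.2.2, fun h => ⟨hx, hy, hxy, h⟩⟩
  · -- uniqueness
    rintro O₁ O₂ ⟨h1, a1⟩ ⟨h2, a2⟩
    funext p x y
    apply propext
    constructor
    · intro h
      obtain ⟨hx, hy, hxy⟩ := h1.1 _ _ _ h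
      exact (a2 _ _ _ hx hy hxy).mpr ((a1 _ _ _ hx hy hxy).mp h)
    · intro h
      obtain ⟨hx, hy, hxy⟩ := h2.1 _ _ _ h
      exact (a1 _ _ _ hx hy hxy).mpr ((a2 _ _ _ hx hy hxy).mp h)
end

section
/- The group G with presentation ⟨a, b, c, t | a² = t, b³ = t, c⁷ = t, abc = t³⟩ is not left-orderable; in fact it admits no left-invariant total order. -/
/-!
Suppose `<` is a left-invariant total order with `1 < t`. Each of `a, b, c` is a root of `t` of
exponent at least two, so it is positive and strictly below `t`, and it commutes with `t`. Moving
the powers of `t` to the left then gives `abc < t³`, contradicting `abc = t³`; for `t < 1` apply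
the same to the inverses. Hence `t = 1`, so `a² = 1` and, left orders being torsion-free,
`a = 1`. This is impossible: `a ↦ (3 4)(5 6)`, `b ↦ (0 1 3)(2 4 5)`, `c ↦ (ab)⁻¹`, `t ↦ 1`
defines a homomorphism to `Perm (Fin 7)`.
-/

def seifertRels : Set (FreeGroup (Fin 4)) :=
  { (FreeGroup.of 0) ^ 2 * (FreeGroup.of 3)⁻¹,
    (FreeGroup.of 1) ^ 3 * (FreeGroup.of 3)⁻¹,
    (FreeGroup.of 2) ^ 7 * (FreeGroup.of 3)⁻¹,
    (FreeGroup.of 0) * (FreeGroup.of 1) * (FreeGroup.of 2) * ((FreeGroup.of 3) ^ 3)⁻¹ }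

section LeftOrderedGroup

variable {G : Type*} [Group G] [LinearOrder G] [MulLeftStrictMono G]

theorem eq_one_of_pow_eq_one {x : G} {n : ℕ} (hn : n ≠ 0) (h : x ^ n = 1) : x = 1 := by
  have := mulLeftMono_of_mulLeftStrictMono G
  rcases lt_trichotomy x 1 with hx | hx | hx
  · exact absurd h (pow_lt_one' hx hn).ne
  · exact hx
  · exact absurd h (one_lt_pow' hx hn).ne'

theorem lt_of_pow_eq {x t : G} {n : ℕ} (hn : 2 ≤ n) (ht : 1 < t) (h : x ^ n = t) : x < t := by
  have := mulLeftMono_of_mulLeftStrictMono G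
  have hx : 1 < x := by
    by_contra! hx
    exact (pow_le_one' hx n).not_gt (h ▸ ht)
  simpa [h] using pow_lt_pow_right' hx (show 1 < n by omega)

theorem mul_lt_mul_of_lt_of_commute {x y s t : G} (hx : x < t) (hy : y < s)
    (hxs : Commute x s) (hts : Commute t s) : x * y < t * s :=
  calc x * y < x * s := mul_lt_mul_right hy x
    _ = s * x := hxs.eq
    _ < s * t := mul_lt_mul_right hx s
    _ = t * s := hts.eq.symm

theorem mul_mul_lt_pow_three_of_pow_eq {a b c t : G} {p q r : ℕ} (hp : 2 ≤ p) (hq : 2 ≤ q)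
    (hr : 2 ≤ r) (ht : 1 < t) (ha : a ^ p = t) (hb : b ^ q = t) (hc : c ^ r = t) :
    a * b * c < t ^ 3 := by
  have hta : Commute a t := ha ▸ Commute.self_pow a p
  have htb : Commute b t := hb ▸ Commute.self_pow b q
  have hbc : b * c < t * t :=
    mul_lt_mul_of_lt_of_commute (lt_of_pow_eq hq ht hb) (lt_of_pow_eq hr ht hc) htb (.refl t)
  rw [mul_assoc, pow_three]
  exact mul_lt_mul_of_lt_of_commute (lt_of_pow_eq hp ht ha) hbc (hta.mul_right hta)
    ((Commute.refl t).mul_right (.refl t))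

theorem eq_one_of_pow_eq_of_mul_mul_eq_pow_three {a b c t : G} {p q r : ℕ} (hp : 2 ≤ p)
    (hq : 2 ≤ q) (hr : 2 ≤ r) (ha : a ^ p = t) (hb : b ^ q = t) (hc : c ^ r = t)
    (habc : a * b * c = t ^ 3) : t = 1 := by
  rcases lt_trichotomy t 1 with ht | ht | ht
  · have hinv : c⁻¹ * b⁻¹ * a⁻¹ = t⁻¹ ^ 3 := by
      rw [inv_pow, ← habc]
      group
    exact absurd hinv (mul_mul_lt_pow_three_of_pow_eq hr hq hp (one_lt_inv'.mpr ht)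
      (by rw [inv_pow, hc]) (by rw [inv_pow, hb]) (by rw [inv_pow, ha])).ne
  · exact ht
  · exact absurd habc (mul_mul_lt_pow_three_of_pow_eq hp hq hr ht ha hb hc).ne

end LeftOrderedGroup

namespace seifertRels

local notation "G" => PresentedGroup seifertRels

open PresentedGroup

theorem of_sq : (of 0 : G) ^ 2 = of 3 := by
  simpa [of] using mk_eq_mk_of_mul_inv_mem (rels := seifertRels) (Or.inl rfl)

theorem of_pow_three : (of 1 : G) ^ 3 = of 3 := by
  simpa [of] using mk_eq_mk_of_mul_inv_mem (rels := seifertRels) (Or.inr (Or.inl rfl))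

theorem of_pow_seven : (of 2 : G) ^ 7 = of 3 := by
  simpa [of] using mk_eq_mk_of_mul_inv_mem (rels := seifertRels) (Or.inr (Or.inr (Or.inl rfl)))

theorem of_mul_of_mul_of : (of 0 * of 1 * of 2 : G) = of 3 ^ 3 := by
  simpa [of] using mk_eq_mk_of_mul_inv_mem (rels := seifertRels) (Or.inr (Or.inr (Or.inr rfl)))

set_option maxRecDepth 10000 in
theorem lift_perm_eq_one :
    let a : Equiv.Perm (Fin 7) := Equiv.swap 3 4 * Equiv.swap 5 6
    let b : Equiv.Perm (Fin 7) :=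
      Equiv.swap 0 1 * Equiv.swap 1 3 * (Equiv.swap 2 4 * Equiv.swap 4 5)
    ∀ x ∈ seifertRels, FreeGroup.lift ![a, b, (a * b)⁻¹, 1] x = 1 := by
  rintro a b x (rfl | rfl | rfl | rfl) <;> simp [a, b] <;> decide

theorem of_zero_ne_one : (of 0 : G) ≠ 1 := by
  intro h
  have := congrArg (toGroup lift_perm_eq_one) h
  rw [toGroup.of, map_one] at this
  exact absurd this (by decide)

end seifertRels

/-- The group `⟨a,b,c,t | a² = t, b³ = t, c⁷ = t, abc = t³⟩` admits no
left-invariant total order. -/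
theorem stmt16 :
    ¬ ∃ r : PresentedGroup seifertRels → PresentedGroup seifertRels → Prop,
        IsStrictTotalOrder (PresentedGroup seifertRels) r ∧
        ∀ a b c : PresentedGroup seifertRels, r a b ↔ r (c * a) (c * b) := by
  rintro ⟨r, hr, hinv⟩
  let := @linearOrderOfSTO _ r hr (Classical.decRel r)
  have : MulLeftStrictMono (PresentedGroup seifertRels) := ⟨fun c _ _ h => (hinv _ _ c).mp h⟩
  have ht : PresentedGroup.of 3 = (1 : PresentedGroup seifertRels) :=
    eq_one_of_pow_eq_of_mul_mul_eq_pow_three le_rfl (by norm_num) (by norm_num)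
      seifertRels.of_sq seifertRels.of_pow_three seifertRels.of_pow_seven
      seifertRels.of_mul_of_mul_of
  exact seifertRels.of_zero_ne_one <| eq_one_of_pow_eq_one two_ne_zero (seifertRels.of_sq.trans ht)
end

section
/- Let P = Σᵢ aᵢ tⁱ be a Laurent polynomial with integer coefficients satisfying P(1) = 0, and suppose for some integer e the identity e = Σ_{i>0} aᵢ − Σ_{i<0} aᵢ holds, where moreover for every n ≥ 0 one has (2n+1)e = Σ_{j≠0} Σ_{i=−2n}^{2n} (2n+1−|i|)·a_{i+j(2n+1)}·sign(j). Then e = 0. -/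
/-- Let `P = Σᵢ aᵢ tⁱ` be an integer Laurent polynomial (a finitely supported
family `a : ℤ →₀ ℤ` of coefficients) with `P(1) = 0`, and let `e` be an integer
with `e = Σ_{i>0} aᵢ − Σ_{i<0} aᵢ` such that for every `n ≥ 0`,
`(2n+1)·e = Σ_{j≠0} Σ_{i=−2n}^{2n} (2n+1−|i|)·a_{i+j(2n+1)}·sign(j)`.
Then `e = 0`. -/
theorem stmt18 (a : ℤ →₀ ℤ) (e : ℤ)
    (hsum : (∑ᶠ i : ℤ, a i) = 0)
    (he : e = (∑ᶠ i : ℤ, if 0 < i then a i else 0) -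
              (∑ᶠ i : ℤ, if i < 0 then a i else 0))
    (h : ∀ n : ℕ, (2 * (n : ℤ) + 1) * e =
      ∑ᶠ j : ℤ, if j ≠ 0 then
        (if 0 < j then (1 : ℤ) else -1) *
          ∑ i ∈ Finset.Icc (-(2 * (n : ℤ))) (2 * (n : ℤ)),
            (2 * (n : ℤ) + 1 - |i|) * a (i + j * (2 * (n : ℤ) + 1))
      else 0) :
    e = 0 := by
  classical
  set B : ℕ := a.support.sup Int.natAbs with hBdef
  have hB2 : ∀ k : ℤ, a k ≠ 0 → |k| ≤ (B : ℤ) := by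
    intro k hk
    have hmem : k ∈ a.support := Finsupp.mem_support_iff.mpr hk
    have := Finset.le_sup (f := Int.natAbs) hmem
    rw [Int.abs_eq_natAbs]
    exact_mod_cast this
  have hB : ∀ k : ℤ, (B : ℤ) < |k| → a k = 0 := by
    intro k hk
    by_contra hk2
    exact absurd (hB2 k hk2) (by omega)
  -- the two pieces of the eventual constant
  set Cpos : ℤ := ∑ k ∈ a.support.filter (fun k => 0 < k), k * a k with hCpos
  set Cneg : ℤ := ∑ k ∈ a.support.filter (fun k => k < 0), k * a k with hCneg
  have key : ∀ n : ℕ, (B : ℤ) ≤ 2 * (n : ℤ) →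
      (2 * (n : ℤ) + 1) * e = Cneg + Cpos := by
    intro n hn
    set N : ℤ := (n : ℤ) with hN
    have hNnn : 0 ≤ N := Int.natCast_nonneg n
    set g : ℤ → ℤ := fun j => if j ≠ 0 then
        (if 0 < j then (1 : ℤ) else -1) *
          ∑ i ∈ Finset.Icc (-(2 * N)) (2 * N),
            (2 * N + 1 - |i|) * a (i + j * (2 * N + 1))
      else 0 with hg
    have hfin : (2 * N + 1) * e = ∑ᶠ j : ℤ, g j := h n
    -- support of g is contained in {-1, 1}
    have hsupp : Function.support g ⊆ (({-1, 1} : Finset ℤ) : Set ℤ) := by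
      rw [Function.support_subset_iff']
      intro j hj
      simp only [Finset.coe_insert, Finset.coe_singleton, Set.mem_insert_iff,
        Set.mem_singleton_iff, not_or] at hj
      by_cases hj0 : j = 0
      · simp [hg, hj0]
      · have hjcases : j ≤ -2 ∨ 2 ≤ j := by omega
        have hinner : ∑ i ∈ Finset.Icc (-(2 * N)) (2 * N),
            (2 * N + 1 - |i|) * a (i + j * (2 * N + 1)) = 0 := by
          apply Finset.sum_eq_zero
          intro i hi
          rw [Finset.mem_Icc] at hi
          have hzero : a (i + j * (2 * N + 1)) = 0 := by
            apply hB
            rcases hjcases with hj2 | hj2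
            · have hle : j * (2 * N + 1) ≤ (-2) * (2 * N + 1) :=
                mul_le_mul_of_nonneg_right hj2 (by linarith)
              have : i + j * (2 * N + 1) ≤ -(2 * N + 2) := by linarith [hi.2]
              rw [abs_of_nonpos (by linarith)]
              linarith [hn]
            · have hle : (2 : ℤ) * (2 * N + 1) ≤ j * (2 * N + 1) :=
                mul_le_mul_of_nonneg_right hj2 (by linarith)
              have : (2 * N + 2 : ℤ) ≤ i + j * (2 * N + 1) := by linarith [hi.1]
              rw [abs_of_nonneg (by linarith)]
              linarith [hn]
          rw [hzero, mul_zero]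
        simp [hg, hj0, hinner]
    have hsum2 : ∑ᶠ j : ℤ, g j = g (-1) + g 1 := by
      rw [finsum_eq_finset_sum_of_support_subset g hsupp]
      rw [Finset.sum_pair (by norm_num : (-1 : ℤ) ≠ 1)]
    -- evaluate g 1
    have hg1 : g 1 = Cpos := by
      have e1 : ∑ k ∈ Finset.Icc (1 : ℤ) (4 * N + 1),
          (2 * N + 1 - |k - (2 * N + 1)|) * a k
          = ∑ i ∈ Finset.Icc (-(2 * N)) (2 * N),
            (2 * N + 1 - |i|) * a (i + 1 * (2 * N + 1)) := by
        rw [show Finset.Icc (1 : ℤ) (4 * N + 1)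
            = (Finset.Icc (-(2 * N)) (2 * N)).map (addRightEmbedding (2 * N + 1)) from by
          rw [Finset.map_add_right_Icc]; congr 1 <;> ring]
        rw [Finset.sum_map]
        apply Finset.sum_congr rfl
        intro i _
        simp only [addRightEmbedding_apply, add_sub_cancel_right, one_mul]
      have e2 : ∑ k ∈ Finset.Icc (1 : ℤ) (4 * N + 1),
          (2 * N + 1 - |k - (2 * N + 1)|) * a k
          = ∑ k ∈ Finset.Icc (1 : ℤ) (4 * N + 1), k * a k := by
        apply Finset.sum_congr rfl
        intro k hk
        rw [Finset.mem_Icc] at hk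
        by_cases hak : a k = 0
        · rw [hak, mul_zero, mul_zero]
        · have := abs_le.mp (hB2 k hak)
          rw [abs_of_nonpos (by linarith [hk.1, this.2, hn])]
          ring
      have e3 : ∑ k ∈ Finset.Icc (1 : ℤ) (4 * N + 1), k * a k = Cpos := by
        rw [hCpos]
        symm
        apply Finset.sum_subset
        · intro k hk
          rw [Finset.mem_filter, Finsupp.mem_support_iff] at hk
          have := abs_le.mp (hB2 k hk.1)
          rw [Finset.mem_Icc]
          constructor
          · linarith [hk.2]
          · linarith [this.2, hn]
        · intro k hk hk2
          rw [Finset.mem_Icc] at hk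
          by_cases hak : a k = 0
          · rw [hak, mul_zero]
          · exact absurd (Finset.mem_filter.mpr
              ⟨Finsupp.mem_support_iff.mpr hak, by omega⟩) hk2
      have hgval : g 1 = ∑ i ∈ Finset.Icc (-(2 * N)) (2 * N),
          (2 * N + 1 - |i|) * a (i + 1 * (2 * N + 1)) := by
        simp [hg]
      rw [hgval, ← e1, e2, e3]
    -- evaluate g (-1)
    have hgm1 : g (-1) = Cneg := by
      have f1 : ∑ k ∈ Finset.Icc (-(4 * N + 1)) (-1 : ℤ),
          (2 * N + 1 - |k + (2 * N + 1)|) * a k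
          = ∑ i ∈ Finset.Icc (-(2 * N)) (2 * N),
            (2 * N + 1 - |i|) * a (i + (-1) * (2 * N + 1)) := by
        rw [show Finset.Icc (-(4 * N + 1)) (-1 : ℤ)
            = (Finset.Icc (-(2 * N)) (2 * N)).map (addRightEmbedding (-(2 * N + 1))) from by
          rw [Finset.map_add_right_Icc]; congr 1 <;> ring]
        rw [Finset.sum_map]
        apply Finset.sum_congr rfl
        intro i _
        simp only [addRightEmbedding_apply]
        rw [show i + -(2 * N + 1) + (2 * N + 1) = i by ring,
            show i + -(2 * N + 1) = i + (-1) * (2 * N + 1) by ring]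
      have f2 : ∑ k ∈ Finset.Icc (-(4 * N + 1)) (-1 : ℤ),
          (2 * N + 1 - |k + (2 * N + 1)|) * a k
          = ∑ k ∈ Finset.Icc (-(4 * N + 1)) (-1 : ℤ), -(k * a k) := by
        apply Finset.sum_congr rfl
        intro k hk
        rw [Finset.mem_Icc] at hk
        by_cases hak : a k = 0
        · rw [hak, mul_zero, mul_zero, neg_zero]
        · have := abs_le.mp (hB2 k hak)
          rw [abs_of_nonneg (by linarith [this.1, hn])]
          ring
      have f3 : ∑ k ∈ Finset.Icc (-(4 * N + 1)) (-1 : ℤ), k * a k = Cneg := by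
        rw [hCneg]
        symm
        apply Finset.sum_subset
        · intro k hk
          rw [Finset.mem_filter, Finsupp.mem_support_iff] at hk
          have := abs_le.mp (hB2 k hk.1)
          rw [Finset.mem_Icc]
          constructor
          · linarith [this.1, hn]
          · linarith [hk.2]
        · intro k hk hk2
          rw [Finset.mem_Icc] at hk
          rw [Finset.mem_filter, Finsupp.mem_support_iff] at hk2
          push_neg at hk2
          by_cases hak : a k = 0
          · rw [hak, mul_zero]
          · exact absurd (hk2 hak) (by omega)
      have hgval : g (-1) = -(∑ i ∈ Finset.Icc (-(2 * N)) (2 * N),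
          (2 * N + 1 - |i|) * a (i + (-1) * (2 * N + 1))) := by
        simp [hg]
      rw [hgval, ← f1, f2, Finset.sum_neg_distrib, neg_neg, f3]
    rw [hfin, hsum2, hgm1, hg1]
  have k1 := key B (by push_cast; omega)
  have k2 := key (B + 1) (by push_cast; omega)
  push_cast at k1 k2
  linarith
end

section
/- If a countable group G admits a faithful action by orientation-preserving homeomorphisms on the circle, then G admits a left-invariant circular order. -/
/-! Let `a` be a point of the circle and `H` its stabilizer. The orbit map `x ↦ x • a` is
`G`-equivariant, and its fibres are the cosets `xH`. Cut open at `a`, the circle becomes a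
linear order on which `H` acts by order automorphisms, faithfully, so comparing elements of `H`
lexicographically through their values (indexed by any well-order of the circle) gives a
left-invariant linear order on `H`, and hence on every coset: `xh < xh'` iff `h < h'`.
Ordering `G` lexicographically, first by the circular order of the orbit points and then inside
each coset, gives a left-invariant circular order. -/

open Function

theorem IsCircularOrderFam.of_cyclic {S : Type*} {o : S → S → S → Prop}
    (ne : ∀ p x y, o p x y → x ≠ p ∧ y ≠ p ∧ x ≠ y)
    (total : ∀ p x y, x ≠ p → y ≠ p → x ≠ y → o p x y ∨ o p y x)
    (asymm : ∀ p x y, o p x y → ¬ o p y x)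
    (trans : ∀ p x y z, o p x y → o p y z → o p x z)
    (cyclic : ∀ p x y, o p x y → o y p x) : IsCircularOrderFam o := by
  refine ⟨ne, total, asymm, trans, cyclic, fun p q x y _ _ hxq _ hyq hxy =>
    ⟨fun hxq' hqy => ?_, fun hxy' hn => ?_⟩⟩
  · exact trans _ _ _ _ (cyclic _ _ _ (cyclic _ _ _ hqy)) (cyclic _ _ _ hxq')
  · by_contra hq
    have hyx : o q y x := (total q x y hxq hyq hxy).resolve_left hq
    exact hn ⟨cyclic _ _ _ (trans _ _ _ _ (cyclic _ _ _ hyx) (cyclic _ _ _ (cyclic _ _ _ hxy'))),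
      cyclic _ _ _ (cyclic _ _ _
        (trans _ _ _ _ (cyclic _ _ _ hxy') (cyclic _ _ _ (cyclic _ _ _ hyx))))⟩

theorem sbtw_or_sbtw_of_ne {α : Type*} [CircularOrder α] {a b c : α}
    (hab : a ≠ b) (hbc : b ≠ c) (hca : c ≠ a) : sbtw a b c ∨ sbtw a c b := by
  by_contra! h
  have h₁ : btw c b a := btw_iff_not_sbtw.2 h.1
  have h₂ : btw b c a := btw_iff_not_sbtw.2 h.2
  rcases btw_antisymm h₂ h₁.cyclic_left.cyclic_left with h | h | h <;> tauto

theorem Pi.toLex_comp_lt_toLex_comp {ι β γ : Type*} [LT ι] [Preorder β] [Preorder γ]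
    {m : β → γ} (hm : StrictMono m) {u v : ι → β} (h : toLex u < toLex v) :
    toLex (m ∘ u) < toLex (m ∘ v) := by
  obtain ⟨i, hj, hi⟩ := h
  exact ⟨i, fun j hji => congrArg m (hj j hji), hm hi⟩

/-- The circular order on `α` cut open at `a`: a linear order with least element `a`. -/
def CutAt {α : Type*} (_ : α) : Type _ := α

namespace CutAt

variable {α : Type*} [CircularOrder α]

def toCutAt (a : α) : α ≃ CutAt a := Equiv.refl α

def Rel (a u v : α) : Prop := sbtw a u v ∨ u = a ∧ v ≠ a

theorem isStrictTotalOrder_rel (a : α) : IsStrictTotalOrder α (Rel a) where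
  irrefl u := by rintro (h | ⟨rfl, h⟩) <;> simp_all [sbtw_irrefl_right]
  trans u v w := by
    rintro (huv | ⟨rfl, hv⟩) (hvw | ⟨rfl, hw⟩)
    · exact .inl (sbtw_trans_right huv hvw)
    · exact absurd huv sbtw_irrefl_left_right
    · exact .inr ⟨rfl, by rintro rfl; exact sbtw_irrefl_left_right hvw⟩
    · exact absurd rfl hv
  trichotomous u v huv hvu := by
    by_contra hne
    by_cases hu : u = a
    · exact huv (.inr ⟨hu, fun hv => hne (hu.trans hv.symm)⟩)
    by_cases hv : v = a
    · exact hvu (.inr ⟨hv, hu⟩)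
    rcases sbtw_or_sbtw_of_ne (Ne.symm hu) hne hv with h | h
    exacts [huv (.inl h), hvu (.inl h)]

noncomputable instance (a : α) : LinearOrder (CutAt a) :=
  @linearOrderOfSTO (CutAt a) (fun u v : α => Rel a u v) (isStrictTotalOrder_rel a)
    (Classical.decRel _)

theorem toCutAt_lt_toCutAt {a u v : α} :
    toCutAt a u < toCutAt a v ↔ sbtw a u v ∨ u = a ∧ v ≠ a := Iff.rfl

theorem toCutAt_map_lt_map {π : α → α} (hπ : Injective π)
    (hsbtw : ∀ a b c, sbtw (π a) (π b) (π c) ↔ sbtw a b c) {a u v : α} :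
    toCutAt (π a) (π u) < toCutAt (π a) (π v) ↔ toCutAt a u < toCutAt a v := by
  simp only [toCutAt_lt_toCutAt, hsbtw, hπ.eq_iff, ne_eq]

end CutAt

def WellOrdered (α : Type*) : Type _ := α

noncomputable instance {α : Type*} : LinearOrder (WellOrdered α) :=
  @IsWellOrder.linearOrder (WellOrdered α) (WellOrderingRel (α := α)) WellOrderingRel.isWellOrder

instance {α : Type*} : WellFoundedLT (WellOrdered α) := ⟨(WellOrderingRel.isWellOrder (α := α)).wf⟩

section LexRefine

variable {S L : Type*} [LinearOrder L] {κ : S → L} {lt : S → S → Prop} {x y z : S}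

def LexRefine (κ : S → L) (lt : S → S → Prop) (x y : S) : Prop :=
  κ x < κ y ∨ κ x = κ y ∧ lt x y

theorem LexRefine.irrefl [Std.Irrefl lt] (x : S) : ¬ LexRefine κ lt x x := by
  rintro (h | ⟨-, h⟩)
  exacts [h.false, irrefl_of lt x h]

theorem LexRefine.trans [IsTrans S lt] (hxy : LexRefine κ lt x y) (hyz : LexRefine κ lt y z) :
    LexRefine κ lt x z := by
  rcases hxy with hxy | ⟨exy, hxy⟩ <;> rcases hyz with hyz | ⟨eyz, hyz⟩
  · exact .inl (hxy.trans hyz)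
  · exact .inl (eyz ▸ hxy)
  · exact .inl (exy ▸ hyz)
  · exact .inr ⟨exy.trans eyz, _root_.trans hxy hyz⟩

theorem LexRefine.asymm [IsStrictOrder S lt] (hxy : LexRefine κ lt x y) :
    ¬ LexRefine κ lt y x :=
  fun hyx => LexRefine.irrefl x (hxy.trans hyx)

theorem LexRefine.total (htotal : ∀ x y, κ x = κ y → x ≠ y → lt x y ∨ lt y x) (hxy : x ≠ y) :
    LexRefine κ lt x y ∨ LexRefine κ lt y x := by
  rcases lt_trichotomy (κ x) (κ y) with h | h | h
  · exact .inl (.inl h)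
  · exact (htotal x y h hxy).imp (fun h' => .inr ⟨h, h'⟩) (fun h' => .inr ⟨h.symm, h'⟩)
  · exact .inr (.inl h)

end LexRefine

section LexCircOrder

variable {S α : Type*} (τ : S → α) (lt : S → S → Prop)

/- The order at base point `p` lists first the successors of `p` in its fibre (rank `0`), then
the other fibres in the circular order starting from `τ p` (rank `1`), then the predecessors of
`p` in its fibre (rank `2`); `lexKey` records the first two levels of this comparison. -/
open scoped Classical in
noncomputable def fibreRank (p x : S) : ℕ := if τ x = τ p then if lt p x then 0 else 2 else 1

noncomputable def lexKey (p x : S) : ℕ ×ₗ CutAt (τ p) :=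
  toLex (fibreRank τ lt p x, CutAt.toCutAt (τ p) (τ x))

variable {τ lt} {p x y : S}

theorem lexKey_inj :
    lexKey τ lt p x = lexKey τ lt p y ↔ fibreRank τ lt p x = fibreRank τ lt p y ∧ τ x = τ y := by
  simp [lexKey, Prod.ext_iff]

theorem fibreRank_of_ne (h : τ x ≠ τ p) : fibreRank τ lt p x = 1 := by
  simp [fibreRank, h]

theorem fibreRank_of_lt (he : τ x = τ p) (h : lt p x) : fibreRank τ lt p x = 0 := by
  simp [fibreRank, he, h]

theorem fibreRank_of_gt [IsStrictOrder S lt] (he : τ x = τ p) (h : lt x p) :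
    fibreRank τ lt p x = 2 := by
  simp [fibreRank, he, asymm_of lt h]

theorem fibreRank_cases [IsStrictOrder S lt]
    (htotal : ∀ x y, τ x = τ y → x ≠ y → lt x y ∨ lt y x) (hxp : x ≠ p) :
    (τ x = τ p ∧ lt p x ∧ fibreRank τ lt p x = 0) ∨ (τ x ≠ τ p ∧ fibreRank τ lt p x = 1) ∨
      (τ x = τ p ∧ lt x p ∧ fibreRank τ lt p x = 2) := by
  by_cases he : τ x = τ p
  · rcases htotal p x he.symm hxp.symm with h | h
    · exact .inl ⟨he, h, fibreRank_of_lt he h⟩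
    · exact .inr (.inr ⟨he, h, fibreRank_of_gt he h⟩)
  · exact .inr (.inl ⟨he, fibreRank_of_ne he⟩)

variable [CircularOrder α]

variable (τ lt) in
def lexCircOrder (p x y : S) : Prop := x ≠ p ∧ y ≠ p ∧ LexRefine (lexKey τ lt p) lt x y

theorem lexKey_lt_lexKey :
    lexKey τ lt p x < lexKey τ lt p y ↔ fibreRank τ lt p x < fibreRank τ lt p y ∨
      fibreRank τ lt p x = fibreRank τ lt p y ∧
        CutAt.toCutAt (τ p) (τ x) < CutAt.toCutAt (τ p) (τ y) :=
  Prod.Lex.toLex_lt_toLex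

theorem lexRefine_lexKey_of_fibreRank_lt (h : fibreRank τ lt p x < fibreRank τ lt p y) :
    LexRefine (lexKey τ lt p) lt x y :=
  .inl (lexKey_lt_lexKey.2 (.inl h))

theorem fibreRank_le_of_lexRefine (h : LexRefine (lexKey τ lt p) lt x y) :
    fibreRank τ lt p x ≤ fibreRank τ lt p y := by
  rcases h with h | ⟨h, -⟩
  · rcases lexKey_lt_lexKey.1 h with h | ⟨h, -⟩ <;> omega
  · exact (lexKey_inj.1 h).1.le

theorem lexRefine_lexKey_iff_of_fibre (hτ : τ x = τ y)
    (hr : fibreRank τ lt p x = fibreRank τ lt p y) :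
    LexRefine (lexKey τ lt p) lt x y ↔ lt x y := by
  have he : lexKey τ lt p x = lexKey τ lt p y := lexKey_inj.2 ⟨hr, hτ⟩
  simp [LexRefine, he]

theorem lexRefine_lexKey_iff_sbtw (hx : τ x ≠ τ p) (hy : τ y ≠ τ p) (hxy : τ x ≠ τ y) :
    LexRefine (lexKey τ lt p) lt x y ↔ sbtw (τ p) (τ x) (τ y) := by
  simp [LexRefine, lexKey_lt_lexKey, lexKey_inj, fibreRank_of_ne, hx, hy, hxy,
    CutAt.toCutAt_lt_toCutAt]

theorem lexCircOrder_map_iff {σ : S → S} {π : α → α} (hσ : Injective σ) (hπ : Injective π)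
    (hsbtw : ∀ a b c, sbtw (π a) (π b) (π c) ↔ sbtw a b c) (hτ : ∀ x, τ (σ x) = π (τ x))
    (hlt : ∀ x y, lt (σ x) (σ y) ↔ lt x y) :
    lexCircOrder τ lt (σ p) (σ x) (σ y) ↔ lexCircOrder τ lt p x y := by
  have hrank (z : S) : fibreRank τ lt (σ p) (σ z) = fibreRank τ lt p z := by
    rw [fibreRank, fibreRank, hτ, hτ, hπ.eq_iff, hlt]
  have hkey_lt : lexKey τ lt (σ p) (σ x) < lexKey τ lt (σ p) (σ y) ↔
      lexKey τ lt p x < lexKey τ lt p y := by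
    rw [lexKey_lt_lexKey, lexKey_lt_lexKey, hrank, hrank, hτ p, hτ x, hτ y,
      CutAt.toCutAt_map_lt_map hπ hsbtw]
  have hkey_eq : lexKey τ lt (σ p) (σ x) = lexKey τ lt (σ p) (σ y) ↔
      lexKey τ lt p x = lexKey τ lt p y := by
    simp only [lexKey_inj, hrank, hτ, hπ.eq_iff]
  simp only [lexCircOrder, LexRefine, hσ.ne_iff, hkey_lt, hkey_eq, hlt]

variable [IsStrictOrder S lt] (htotal : ∀ x y, τ x = τ y → x ≠ y → lt x y ∨ lt y x)
include htotal

theorem lexCircOrder_cyclic (h : lexCircOrder τ lt p x y) : lexCircOrder τ lt y p x := by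
  obtain ⟨hxp, hyp, hxy⟩ := h
  have hne : x ≠ y := by rintro rfl; exact LexRefine.irrefl x hxy
  refine ⟨hyp.symm, hne, ?_⟩
  have hle := fibreRank_le_of_lexRefine hxy
  rcases fibreRank_cases htotal hxp with ⟨ex, px, rx⟩ | ⟨ex, rx⟩ | ⟨ex, xp, rx⟩ <;>
  rcases fibreRank_cases htotal hyp with ⟨ey, py, ry⟩ | ⟨ey, ry⟩ | ⟨ey, yp, ry⟩ <;>
  try omega
  -- the remaining rank pairs of `(x, y)` are `(0,0), (0,1), (0,2), (1,1), (1,2), (2,2)`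
  · have lxy := (lexRefine_lexKey_iff_of_fibre (ex.trans ey.symm) (rx.trans ry.symm)).1 hxy
    refine (lexRefine_lexKey_iff_of_fibre ex.symm ?_).2 px
    rw [fibreRank_of_gt ey.symm py, fibreRank_of_gt (ex.trans ey.symm) lxy]
  · have hpy : τ p ≠ τ y := fun h => ey h.symm
    refine (lexRefine_lexKey_iff_of_fibre ex.symm ?_).2 px
    rw [fibreRank_of_ne hpy, fibreRank_of_ne (ex ▸ hpy)]
  · refine (lexRefine_lexKey_iff_of_fibre ex.symm ?_).2 px
    rw [fibreRank_of_lt ey.symm yp, fibreRank_of_lt (ex.trans ey.symm) (_root_.trans yp px)]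
  · have hpy : τ p ≠ τ y := fun h => ey h.symm
    by_cases exy : τ x = τ y
    · have lxy := (lexRefine_lexKey_iff_of_fibre exy (rx.trans ry.symm)).1 hxy
      apply lexRefine_lexKey_of_fibreRank_lt
      rw [fibreRank_of_ne hpy, fibreRank_of_gt exy lxy]
      omega
    · have hs := (lexRefine_lexKey_iff_sbtw ex ey exy).1 hxy
      exact (lexRefine_lexKey_iff_sbtw hpy exy fun h => ex h.symm).2 (sbtw_cyclic_right hs)
  · apply lexRefine_lexKey_of_fibreRank_lt
    rw [fibreRank_of_lt ey.symm yp, fibreRank_of_ne fun h => ex (h.trans ey)]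
    omega
  · have lxy := (lexRefine_lexKey_iff_of_fibre (ex.trans ey.symm) (rx.trans ry.symm)).1 hxy
    apply lexRefine_lexKey_of_fibreRank_lt
    rw [fibreRank_of_lt ey.symm yp, fibreRank_of_gt (ex.trans ey.symm) lxy]
    omega

theorem isCircularOrderFam_lexCircOrder : IsCircularOrderFam (lexCircOrder τ lt) := by
  refine .of_cyclic (fun p x y h => ⟨h.1, h.2.1, ?_⟩) (fun p x y hxp hyp hxy => ?_)
    (fun p x y h h' => LexRefine.asymm h.2.2 h'.2.2)
    (fun p x y z h h' => ⟨h.1, h'.2.1, LexRefine.trans h.2.2 h'.2.2⟩)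
    (fun p x y => lexCircOrder_cyclic htotal)
  · rintro rfl
    exact LexRefine.irrefl x h.2.2
  · have hfibre (x y : S) (h : lexKey τ lt p x = lexKey τ lt p y) := htotal x y (lexKey_inj.1 h).2
    exact (LexRefine.total hfibre hxy).imp (fun h => ⟨hxp, hyp, h⟩) (fun h => ⟨hyp, hxp, h⟩)

end LexCircOrder

section Action

variable {G α : Type*} [Group G] {f : G →* Equiv.Perm α} {a : α} {h u v x y : G}

variable (f a) in
noncomputable def cutProfile (g : G) : Lex (WellOrdered α → CutAt a) :=
  toLex fun z => CutAt.toCutAt a (f g z)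

theorem cutProfile_injective (hinj : Injective f) : Injective (cutProfile f a) := by
  intro g g' e
  apply hinj
  ext z
  exact congrFun (congrArg ofLex e) z

theorem apply_inv_mul_eq_self (he : f x a = f y a) : f (x⁻¹ * y) a = a := by
  rw [map_mul, Equiv.Perm.mul_apply, ← he, map_inv, Equiv.Perm.inv_eq_iff_eq]

variable [CircularOrder α]

variable (f a) in
def cosetLT (x y : G) : Prop := f x a = f y a ∧ cutProfile f a 1 < cutProfile f a (x⁻¹ * y)

theorem cosetLT_mul_iff (g : G) : cosetLT f a (g * x) (g * y) ↔ cosetLT f a x y := by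
  simp [cosetLT, mul_assoc, (f g).injective.eq_iff]

variable (hf : ∀ (g : G) (a b c : α), sbtw a b c → sbtw (f g a) (f g b) (f g c))
include hf

theorem sbtw_apply_iff (g : G) {a b c : α} : sbtw (f g a) (f g b) (f g c) ↔ sbtw a b c := by
  refine ⟨fun h => ?_, hf g a b c⟩
  simpa [← Equiv.Perm.mul_apply, ← map_mul] using hf g⁻¹ _ _ _ h

theorem cutProfile_mul_lt_mul (hh : f h a = a) (huv : cutProfile f a u < cutProfile f a v) :
    cutProfile f a (h * u) < cutProfile f a (h * v) := by
  have hm : StrictMono fun c : CutAt a => CutAt.toCutAt a (f h ((CutAt.toCutAt a).symm c)) := by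
    intro c d hcd
    have := (CutAt.toCutAt_map_lt_map (f h).injective fun _ _ _ => sbtw_apply_iff hf h).2 hcd
    rwa [hh] at this
  simpa only [cutProfile, map_mul, Equiv.Perm.coe_mul, comp_def, Equiv.symm_apply_apply] using
    Pi.toLex_comp_lt_toLex_comp hm huv

theorem cutProfile_mul_lt_mul_iff (hh : f h a = a) :
    cutProfile f a (h * u) < cutProfile f a (h * v) ↔ cutProfile f a u < cutProfile f a v := by
  refine ⟨fun huv => ?_, cutProfile_mul_lt_mul hf hh⟩
  have hh' : f h⁻¹ a = a := by rw [map_inv, Equiv.Perm.inv_eq_iff_eq, hh]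
  simpa using cutProfile_mul_lt_mul hf hh' huv

theorem isStrictOrder_cosetLT : IsStrictOrder G (cosetLT f a) where
  irrefl x h := by
    have := h.2
    rw [inv_mul_cancel] at this
    exact lt_irrefl _ this
  trans x y z hxy hyz := by
    refine ⟨hxy.1.trans hyz.1, hxy.2.trans ?_⟩
    have := (cutProfile_mul_lt_mul_iff hf (apply_inv_mul_eq_self hxy.1)).2 hyz.2
    rwa [mul_one, mul_assoc, mul_inv_cancel_left] at this

theorem cosetLT_total (hinj : Injective f) (he : f x a = f y a) (hxy : x ≠ y) :
    cosetLT f a x y ∨ cosetLT f a y x := by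
  have hne : cutProfile f a 1 ≠ cutProfile f a (x⁻¹ * y) :=
    (cutProfile_injective hinj).ne (by rwa [ne_eq, eq_comm, inv_mul_eq_one])
  refine hne.lt_or_gt.imp (fun h => ⟨he, h⟩) (fun h => ⟨he.symm, ?_⟩)
  simpa [mul_assoc] using (cutProfile_mul_lt_mul_iff hf (apply_inv_mul_eq_self he.symm)).2 h

end Action

theorem stmt19_general {G : Type*} [Group G]
    (f : G →* Equiv.Perm (AddCircle (1 : ℝ)))
    (hinj : Function.Injective f)
    (hor : ∀ (g : G) (a b c : AddCircle (1 : ℝ)),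
      sbtw a b c → sbtw (f g a) (f g b) (f g c)) :
    ∃ o : G → G → G → Prop, IsCircularOrderFam o ∧
      ∀ g p x y : G, o p x y ↔ o (g * p) (g * x) (g * y) := by
  have := isStrictOrder_cosetLT (a := 0) hor
  refine ⟨lexCircOrder (fun x => f x 0) (cosetLT f 0),
    isCircularOrderFam_lexCircOrder fun x y => cosetLT_total hor hinj, fun g p x y => ?_⟩
  have hτ (x : G) : f (g * x) 0 = f g (f x 0) := by simp
  exact (lexCircOrder_map_iff (mul_right_injective g) (f g).injective
    (fun _ _ _ => sbtw_apply_iff hor g) hτ fun x y => cosetLT_mul_iff g).symm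

/-- If a countable group admits a faithful action on the circle `ℝ/ℤ` by
orientation-preserving homeomorphisms, then it admits a left-invariant
circular order. -/
theorem stmt19 {G : Type*} [Group G] [Countable G]
    (f : G →* Equiv.Perm (AddCircle (1 : ℝ)))
    (hinj : Function.Injective f)
    (hcont : ∀ g : G, Continuous (f g))
    (hor : ∀ (g : G) (a b c : AddCircle (1 : ℝ)),
      sbtw a b c → sbtw (f g a) (f g b) (f g c)) :
    ∃ o : G → G → G → Prop, IsCircularOrderFam o ∧
      ∀ g p x y : G, o p x y ↔ o (g * p) (g * x) (g * y) :=
  stmt19_general f hinj hor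
end
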